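/- Let 0 < α < 1, ᾱ = 1 - α, β > 0, l ≥ 0, and let G_H be the high-frequency Green function part of u_t - mΔu_t + (-Δ)^α u = 0. Then there exists C > 0 such that for all φ with Λ^{β+l} φ ∈ L² and all t ≥ 0, ‖Λ^l (G_H(·,t) * φ)‖_{L²} ≤ C (1+t)^{-β/(2ᾱ)} ‖Λ^{β+l} φ‖_{L²}. -/

import Mathlib

set_option maxHeartbeats 1000000


open MeasureTheory

/-- Auxiliary: `e^{-x} (1+x)^σ` is bounded for `x ≥ 0`. -/
lemma aux_exp_poly_bound (σ : ℝ) (hσ : 0 ≤ σ) :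
    ∃ C > 0, ∀ x : ℝ, 0 ≤ x → Real.exp (-x) * (1 + x) ^ σ ≤ C := by
  refine ⟨Nat.factorial (Nat.ceil σ) * Real.exp 1, by positivity, fun x hx => ?_⟩
  have h1x : (1 : ℝ) ≤ 1 + x := by linarith
  have h0x : (0 : ℝ) ≤ 1 + x := by linarith
  have h1 : (1 + x) ^ σ ≤ (1 + x) ^ (Nat.ceil σ : ℕ) := by
    rw [← Real.rpow_natCast]
    exact Real.rpow_le_rpow_of_exponent_le h1x (Nat.le_ceil σ)
  have h2 : (1 + x) ^ (Nat.ceil σ : ℕ) ≤ Nat.factorial (Nat.ceil σ) * Real.exp (1 + x) := by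
    have hsum := Real.sum_le_exp_of_nonneg h0x (Nat.ceil σ + 1)
    have hterm : (1 + x) ^ (Nat.ceil σ : ℕ) / Nat.factorial (Nat.ceil σ) ≤
        ∑ i ∈ Finset.range (Nat.ceil σ + 1), (1 + x) ^ i / (Nat.factorial i : ℝ) := by
      exact Finset.single_le_sum (f := fun i => (1 + x) ^ i / (Nat.factorial i : ℝ))
        (fun i _ => by positivity) (Finset.self_mem_range_succ _)
    have hfac : (0 : ℝ) < Nat.factorial (Nat.ceil σ) := by positivity
    rw [div_le_iff₀ hfac] at hterm
    calc (1 + x) ^ (Nat.ceil σ : ℕ)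
        ≤ (∑ i ∈ Finset.range (Nat.ceil σ + 1), (1 + x) ^ i / (Nat.factorial i : ℝ)) *
            Nat.factorial (Nat.ceil σ) := hterm
      _ ≤ Real.exp (1 + x) * Nat.factorial (Nat.ceil σ) :=
          mul_le_mul_of_nonneg_right hsum hfac.le
      _ = Nat.factorial (Nat.ceil σ) * Real.exp (1 + x) := by ring
  have hexp : Real.exp (-x) * Real.exp (1 + x) = Real.exp 1 := by
    rw [← Real.exp_add]; norm_num
  calc Real.exp (-x) * (1 + x) ^ σ
      ≤ Real.exp (-x) * (Nat.factorial (Nat.ceil σ) * Real.exp (1 + x)) := by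
        apply mul_le_mul_of_nonneg_left (h1.trans h2) (Real.exp_nonneg _)
    _ = Nat.factorial (Nat.ceil σ) * (Real.exp (-x) * Real.exp (1 + x)) := by ring
    _ = Nat.factorial (Nat.ceil σ) * Real.exp 1 := by rw [hexp]

/-- Regularity-loss decay of the high-frequency part for `0 < α < 1`,
stated on the Fourier side via Plancherel:
`‖Λ^l (G_H(·,t) * φ)‖_{L²} ≤ C (1+t)^{-β/(2ᾱ)} ‖Λ^{β+l} φ‖_{L²}`, `ᾱ = 1-α`. -/
theorem high_frequency_decay_loss (n : ℕ) (α β l m R : ℝ)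
    (hα0 : 0 < α) (hα1 : α < 1) (hβ : 0 < β) (hl : 0 ≤ l)
    (hm : 0 < m) (hR : 0 < R) (hR1 : R < 1)
    (χ : EuclideanSpace ℝ (Fin n) → ℝ) (hχ : ContDiff ℝ (⊤ : ℕ∞) χ)
    (hχ1 : ∀ ξ, ‖ξ‖ ≤ R → χ ξ = 1) (hχ0 : ∀ ξ, 2 * R ≤ ‖ξ‖ → χ ξ = 0) :
    ∃ C > 0, ∀ φ : EuclideanSpace ℝ (Fin n) → ℂ,
      MemLp (fun ξ : EuclideanSpace ℝ (Fin n) =>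
        ‖ξ‖ ^ (β + l) • FourierTransform.fourier φ ξ) 2 volume →
      ∀ t : ℝ, 0 ≤ t →
        eLpNorm (fun ξ : EuclideanSpace ℝ (Fin n) =>
            (‖ξ‖ ^ l * (1 - χ ξ) *
              Real.exp (-(t * (‖ξ‖ ^ (2 * α) / (1 + m * ‖ξ‖ ^ 2))))) •
              FourierTransform.fourier φ ξ) 2 volume
          ≤ ENNReal.ofReal (C * (1 + t) ^ (-(β / (2 * (1 - α))))) *
              eLpNorm (fun ξ : EuclideanSpace ℝ (Fin n) =>
                ‖ξ‖ ^ (β + l) • FourierTransform.fourier φ ξ) 2 volume := by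
  set σ := β / (2 * (1 - α)) with hσdef
  clear_value σ
  have hᾱ : (0 : ℝ) < 1 - α := by linarith
  have h2ᾱ : (0 : ℝ) < 2 * (1 - α) := by linarith
  have hσpos : 0 < σ := by rw [hσdef]; exact div_pos hβ h2ᾱ
  -- bound on |1 - χ|
  have hcont : Continuous fun ξ : EuclideanSpace ℝ (Fin n) => |1 - χ ξ| :=
    (continuous_const.sub hχ.continuous).abs
  obtain ⟨ξ₀, _, hξ₀⟩ := (isCompact_closedBall (0 : EuclideanSpace ℝ (Fin n)) (2 * R)).exists_isMaxOn
    ⟨0, Metric.mem_closedBall_self (by linarith)⟩ hcont.continuousOn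
  set M := max (|1 - χ ξ₀|) 1 with hMdef
  clear_value M
  have hM1 : (1 : ℝ) ≤ M := by rw [hMdef]; exact le_max_right _ _
  have hM0 : (0 : ℝ) < M := lt_of_lt_of_le one_pos hM1
  have hMb : ∀ ξ : EuclideanSpace ℝ (Fin n), |1 - χ ξ| ≤ M := by
    intro ξ
    by_cases h : ‖ξ‖ ≤ 2 * R
    · rw [hMdef]
      exact le_trans (hξ₀ (mem_closedBall_zero_iff.mpr h)) (le_max_left _ _)
    · rw [hχ0 ξ (le_of_not_ge h)]
      simpa using hM1
  -- constants
  set A := 1 / R ^ 2 + m with hAdef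
  clear_value A
  have hA : 0 < A := by
    rw [hAdef]
    exact add_pos (div_pos one_pos (pow_pos hR 2)) hm
  set s₀ := R ^ (2 * (1 - α)) with hs₀def
  clear_value s₀
  have hs₀ : 0 < s₀ := by rw [hs₀def]; exact Real.rpow_pos_of_pos hR _
  set K' := max s₀⁻¹ A with hK'def
  clear_value K'
  have hK' : 0 < K' := by rw [hK'def]; exact lt_of_lt_of_le hA (le_max_right _ _)
  obtain ⟨C₁, hC₁, hE1⟩ := aux_exp_poly_bound σ hσpos.le
  set C₂ := C₁ * K' ^ σ with hC₂def
  clear_value C₂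
  have hC₂ : 0 < C₂ := by
    rw [hC₂def]
    exact mul_pos hC₁ (Real.rpow_pos_of_pos hK' _)
  refine ⟨M * C₂, mul_pos hM0 hC₂, fun φ _ t ht => ?_⟩
  have h1t : (0 : ℝ) < 1 + t := by linarith
  -- pointwise multiplier bound
  have key : ∀ ξ : EuclideanSpace ℝ (Fin n),
      |‖ξ‖ ^ l * (1 - χ ξ) * Real.exp (-(t * (‖ξ‖ ^ (2 * α) / (1 + m * ‖ξ‖ ^ 2))))| ≤
        (M * C₂) * (1 + t) ^ (-σ) * ‖ξ‖ ^ (β + l) := by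
    intro ξ
    set r := ‖ξ‖ with hrdef
    clear_value r
    have hr0' : 0 ≤ r := by rw [hrdef]; exact norm_nonneg _
    by_cases hrR : r ≤ R
    · rw [hχ1 ξ (hrdef ▸ hrR)]
      simp only [sub_self, mul_zero, zero_mul, abs_zero]
      have h1 : (0:ℝ) ≤ (1 + t) ^ (-σ) := Real.rpow_nonneg h1t.le _
      have h2 : (0:ℝ) ≤ r ^ (β + l) := Real.rpow_nonneg hr0' _
      exact mul_nonneg (mul_nonneg (mul_pos hM0 hC₂).le h1) h2
    · push_neg at hrR
      have hr0 : 0 < r := lt_trans hR hrR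
      set s := r ^ (2 * (1 - α)) with hsdef
      clear_value s
      have hspos : 0 < s := by rw [hsdef]; exact Real.rpow_pos_of_pos hr0 _
      have hs : s₀ ≤ s := by
        rw [hs₀def, hsdef]
        exact Real.rpow_le_rpow hR.le hrR.le h2ᾱ.le
      have hden1 : (0 : ℝ) < 1 + m * r ^ 2 := by
        have := mul_nonneg hm.le (sq_nonneg r)
        linarith
      -- denominator bound
      have hden : 1 + m * r ^ 2 ≤ A * r ^ 2 := by
        have h1 : R ^ 2 ≤ r ^ 2 := by nlinarith
        have h2 : (1 : ℝ) ≤ r ^ 2 / R ^ 2 := (one_le_div (pow_pos hR 2)).mpr h1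
        have h3 : A * r ^ 2 = r ^ 2 / R ^ 2 + m * r ^ 2 := by
          rw [hAdef]; ring
        linarith
      have hsr : s * r ^ (2 * α) = r ^ 2 := by
        rw [hsdef, ← Real.rpow_add hr0]
        rw [show 2 * (1 - α) + 2 * α = ((2 : ℕ) : ℝ) by push_cast; ring, Real.rpow_natCast]
      have hρ : A⁻¹ / s ≤ r ^ (2 * α) / (1 + m * r ^ 2) := by
        rw [div_le_div_iff₀ hspos hden1]
        calc A⁻¹ * (1 + m * r ^ 2) ≤ A⁻¹ * (A * r ^ 2) := by
              apply mul_le_mul_of_nonneg_left hden (inv_nonneg.mpr hA.le)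
          _ = r ^ 2 := by rw [← mul_assoc, inv_mul_cancel₀ hA.ne', one_mul]
          _ = r ^ (2 * α) * s := by rw [← hsr]; ring
      set x := t * (A⁻¹ / s) with hxdef
      clear_value x
      have hx0 : 0 ≤ x := by
        rw [hxdef]
        exact mul_nonneg ht (div_nonneg (inv_nonneg.mpr hA.le) hspos.le)
      have hmono : Real.exp (-(t * (r ^ (2 * α) / (1 + m * r ^ 2)))) ≤ Real.exp (-x) := by
        apply Real.exp_le_exp.mpr
        have h := mul_le_mul_of_nonneg_left hρ ht
        rw [hxdef]
        linarith
      have hKs : 1 + t ≤ K' * (1 + x) * s := by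
        have hK1 : s₀⁻¹ ≤ K' := by rw [hK'def]; exact le_max_left _ _
        have e1 : (1 : ℝ) ≤ K' * s := by
          calc (1 : ℝ) = s₀⁻¹ * s₀ := (inv_mul_cancel₀ hs₀.ne').symm
            _ ≤ K' * s := mul_le_mul hK1 hs hs₀.le hK'.le
        have e2 : t ≤ K' * (x * s) := by
          have hxs : x * s = t * A⁻¹ := by
            rw [hxdef]; field_simp
          rw [hxs]
          have hKA : A ≤ K' := by rw [hK'def]; exact le_max_right _ _
          have h3 : (1 : ℝ) ≤ K' * A⁻¹ := by
            rw [← div_eq_mul_inv, le_div_iff₀ hA]; linarith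
          calc t = t * 1 := (mul_one t).symm
            _ ≤ t * (K' * A⁻¹) := mul_le_mul_of_nonneg_left h3 ht
            _ = K' * (t * A⁻¹) := by ring
        have hexpand : K' * (1 + x) * s = K' * s + K' * (x * s) := by ring
        linarith
      have hrβ : r ^ β = s ^ σ := by
        rw [hsdef, ← Real.rpow_mul hr0.le]
        congr 1
        rw [hσdef, mul_comm (2 * (1 - α)) (β / (2 * (1 - α))), div_mul_cancel₀ β h2ᾱ.ne']
      -- key exponential estimate
      have hkey : Real.exp (-x) ≤ C₂ * (1 + t) ^ (-σ) * r ^ β := by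
        rw [hrβ, Real.rpow_neg h1t.le]
        have h1tσ : (0 : ℝ) < (1 + t) ^ σ := Real.rpow_pos_of_pos h1t _
        rw [show C₂ * ((1 + t) ^ σ)⁻¹ * s ^ σ = C₂ * s ^ σ / (1 + t) ^ σ by ring,
          le_div_iff₀ h1tσ]
        calc Real.exp (-x) * (1 + t) ^ σ
            ≤ Real.exp (-x) * (K' * (1 + x) * s) ^ σ := by
              apply mul_le_mul_of_nonneg_left _ (Real.exp_nonneg _)
              exact Real.rpow_le_rpow h1t.le hKs hσpos.le
          _ = (Real.exp (-x) * (1 + x) ^ σ) * (K' ^ σ * s ^ σ) := by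
              rw [Real.mul_rpow (mul_nonneg hK'.le (by linarith : (0:ℝ) ≤ 1 + x)) hspos.le,
                Real.mul_rpow hK'.le (by linarith : (0:ℝ) ≤ 1 + x)]
              ring
          _ ≤ C₁ * (K' ^ σ * s ^ σ) := by
              apply mul_le_mul_of_nonneg_right (hE1 x hx0)
              exact mul_nonneg (Real.rpow_nonneg hK'.le _) (Real.rpow_nonneg hspos.le _)
          _ = C₂ * s ^ σ := by rw [hC₂def]; ring
      have habs : |r ^ l * (1 - χ ξ) * Real.exp (-(t * (r ^ (2 * α) / (1 + m * r ^ 2))))| =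
          r ^ l * |1 - χ ξ| * Real.exp (-(t * (r ^ (2 * α) / (1 + m * r ^ 2)))) := by
        rw [abs_mul, abs_mul, abs_of_nonneg (Real.rpow_nonneg hr0' l),
          abs_of_nonneg (Real.exp_nonneg _)]
      rw [habs]
      have hrl : (0 : ℝ) ≤ r ^ l := Real.rpow_nonneg hr0' l
      calc r ^ l * |1 - χ ξ| * Real.exp (-(t * (r ^ (2 * α) / (1 + m * r ^ 2))))
          ≤ r ^ l * M * (C₂ * (1 + t) ^ (-σ) * r ^ β) := by
            apply mul_le_mul
            · exact mul_le_mul_of_nonneg_left (hMb ξ) hrl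
            · exact hmono.trans hkey
            · exact Real.exp_nonneg _
            · exact mul_nonneg hrl hM0.le
        _ = (M * C₂) * (1 + t) ^ (-σ) * r ^ (β + l) := by
            rw [Real.rpow_add hr0]; ring
  -- transfer to L² via monotonicity
  set F := FourierTransform.fourier φ with hFdef
  set K := (M * C₂) * (1 + t) ^ (-σ) with hKdef
  clear_value K
  have hK0 : 0 ≤ K := by
    rw [hKdef]
    exact mul_nonneg (mul_pos hM0 hC₂).le (Real.rpow_nonneg h1t.le _)
  calc eLpNorm (fun ξ : EuclideanSpace ℝ (Fin n) =>
          (‖ξ‖ ^ l * (1 - χ ξ) *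
            Real.exp (-(t * (‖ξ‖ ^ (2 * α) / (1 + m * ‖ξ‖ ^ 2))))) • F ξ) 2 volume
      ≤ eLpNorm (K • fun ξ : EuclideanSpace ℝ (Fin n) => ‖ξ‖ ^ (β + l) • F ξ) 2 volume := by
        apply eLpNorm_mono
        intro ξ
        simp only [Pi.smul_apply, norm_smul, Real.norm_eq_abs]
        rw [abs_of_nonneg hK0, abs_of_nonneg (Real.rpow_nonneg (norm_nonneg ξ) _), ← mul_assoc]
        exact mul_le_mul_of_nonneg_right (key ξ) (norm_nonneg _)
    _ = ‖K‖ₑ * eLpNorm (fun ξ : EuclideanSpace ℝ (Fin n) => ‖ξ‖ ^ (β + l) • F ξ) 2 volume :=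
        eLpNorm_const_smul K _ 2 volume
    _ = ENNReal.ofReal K *
          eLpNorm (fun ξ : EuclideanSpace ℝ (Fin n) => ‖ξ‖ ^ (β + l) • F ξ) 2 volume := by
        rw [Real.enorm_eq_ofReal hK0]
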